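/- arXiv:1512.06765 — 2 statements merged into one kernel-verified Lean document; each statement's English description precedes it below -/
import Mathlib

section
/- Let g = 4, let e_1, …, e_{10} ∈ ℂ, let f(x) = ∏_{m=1}^{10}(x − e_m) = ∑_{k=0}^{10} λ_k x^k with Kleinian 2-polar F(x,z), and for each 5-element subset S of {1,…,10} let Λ^{[S]} be the unique symmetric 4×4 matrix with P_S(x)P_{S^c}(z) + P_S(z)P_{S^c}(x) − F(x,z) = (x−z)² ∑_{i,j=1}^{4} Λ^{[S]}_{ij} x^{i−1} z^{j−1}. Then (1/2) ∑_S Λ^{[S]} = [[56λ_2, 21λ_3, 6λ_4, λ_5], [21λ_3, 72λ_4, 27λ_5, 6λ_6], [6λ_4, 27λ_5, 72λ_6, 21λ_7], [λ_5, 6λ_6, 21λ_7, 56λ_8]], the sum running over all 5-element subsets S (equivalently, over the N_4 = 126 unordered partitions {S, S^c}). -/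
open Finset

noncomputable def wgt : ℕ → ℂ := fun j =>
  if j = 0 then (-8591/34560 : ℂ) else
  if j = 1 then (6041/2880 : ℂ) else
  if j = 2 then (-92771/11520 : ℂ) else
  if j = 3 then (13349/720 : ℂ) else
  if j = 4 then (-163313/5760 : ℂ) else
  if j = 5 then (43319/1440 : ℂ) else
  if j = 6 then (-129067/5760 : ℂ) else
  if j = 7 then (8321/720 : ℂ) else
  if j = 8 then (-45449/11520 : ℂ) else
  if j = 9 then (6947/8640 : ℂ) else
  if j = 10 then (-19/256 : ℂ) else
  0

lemma wgt0 : wgt 0 = (-8591/34560 : ℂ) := by norm_num [wgt]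

lemma wgt1 : wgt 1 = (6041/2880 : ℂ) := by norm_num [wgt]

lemma wgt2 : wgt 2 = (-92771/11520 : ℂ) := by norm_num [wgt]

lemma wgt3 : wgt 3 = (13349/720 : ℂ) := by norm_num [wgt]

lemma wgt4 : wgt 4 = (-163313/5760 : ℂ) := by norm_num [wgt]

lemma wgt5 : wgt 5 = (43319/1440 : ℂ) := by norm_num [wgt]

lemma wgt6 : wgt 6 = (-129067/5760 : ℂ) := by norm_num [wgt]

lemma wgt7 : wgt 7 = (8321/720 : ℂ) := by norm_num [wgt]

lemma wgt8 : wgt 8 = (-45449/11520 : ℂ) := by norm_num [wgt]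

lemma wgt9 : wgt 9 = (6947/8640 : ℂ) := by norm_num [wgt]

lemma wgt10 : wgt 10 = (-19/256 : ℂ) := by norm_num [wgt]

set_option maxHeartbeats 1000000 in
/-- genus 4, the matrix `Λ_4` of Section 5 of the paper: summing the
partition matrices `Λ^{[S]}` over all 5-element subsets `S` of the ten branch indices
(twice the `N_4 = 126` unordered partitions) and halving gives
`Λ_4 = [[56λ_2, 21λ_3, 6λ_4, λ_5], [21λ_3, 72λ_4, 27λ_5, 6λ_6],
        [6λ_4, 27λ_5, 72λ_6, 21λ_7], [λ_5, 6λ_6, 21λ_7, 56λ_8]]`. -/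
theorem genus_four_residual_matrix_sum
    (e : Fin 10 → ℂ)
    (lam : ℕ → ℂ)
    (hlam : ∀ x : ℂ, ∏ m, (x - e m) = ∑ k ∈ Finset.range 11, lam k * x ^ k)
    (F : ℂ → ℂ → ℂ)
    (hF : ∀ x z : ℂ, F x z = 2 * lam 10 * x ^ 5 * z ^ 5
        + ∑ k ∈ Finset.range 5,
            x ^ k * z ^ k * (2 * lam (2 * k) + (x + z) * lam (2 * k + 1)))
    (L : Finset (Fin 10) → Matrix (Fin 4) (Fin 4) ℂ)
    (hLsymm : ∀ S ∈ Finset.powersetCard 5 (Finset.univ : Finset (Fin 10)), (L S).IsSymm)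
    (hL : ∀ S ∈ Finset.powersetCard 5 (Finset.univ : Finset (Fin 10)), ∀ x z : ℂ,
        (∏ i ∈ S, (x - e i)) * (∏ j ∈ Sᶜ, (z - e j))
          + (∏ i ∈ S, (z - e i)) * (∏ j ∈ Sᶜ, (x - e j)) - F x z
        = (x - z) ^ 2 * ∑ a, ∑ b, L S a b * x ^ (a : ℕ) * z ^ (b : ℕ)) :
    (1 / 2 : ℂ) • ∑ S ∈ Finset.powersetCard 5 (Finset.univ : Finset (Fin 10)), L S
      = !![56 * lam 2, 21 * lam 3, 6 * lam 4, lam 5;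
           21 * lam 3, 72 * lam 4, 27 * lam 5, 6 * lam 6;
           6 * lam 4, 27 * lam 5, 72 * lam 6, 21 * lam 7;
           lam 5, 6 * lam 6, 21 * lam 7, 56 * lam 8] := by
  -- Step 1: homogenized form of hlam
  have h10 : ∀ t x z : ℂ, t + 1 ≠ 0 →
      ∏ m, ((x - e m) * t + (z - e m))
        = ∑ k ∈ Finset.range 11, lam k * (t * x + z) ^ k * (t + 1) ^ (10 - k) := by
    intro t x z ht
    have hy := hlam ((t * x + z) / (t + 1))
    calc ∏ m, ((x - e m) * t + (z - e m))
        = ∏ m, ((t + 1) * ((t * x + z) / (t + 1) - e m)) := by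
          refine Finset.prod_congr rfl fun m _ => ?_
          field_simp
          ring
      _ = (t + 1) ^ 10 * ∏ m, ((t * x + z) / (t + 1) - e m) := by
          rw [Finset.prod_mul_distrib, Finset.prod_const, Finset.card_univ]
          simp
      _ = (t + 1) ^ 10 * ∑ k ∈ Finset.range 11, lam k * ((t * x + z) / (t + 1)) ^ k := by
          rw [hy]
      _ = ∑ k ∈ Finset.range 11, lam k * (t * x + z) ^ k * (t + 1) ^ (10 - k) := by
          rw [Finset.mul_sum]
          refine Finset.sum_congr rfl fun k hk => ?_
          have hk' : k ≤ 10 := by have := Finset.mem_range.mp hk; omega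
          have hpow : (t + 1) ^ 10 = (t + 1) ^ (10 - k) * (t + 1) ^ k := by
            rw [← pow_add]; congr 1; omega
          rw [hpow, div_pow]
          have hne : (t + 1) ^ k ≠ 0 := pow_ne_zero _ ht
          field_simp
  -- Step 2: interpolation weights pick out the coefficient of t^5
  have hdelta : ∀ n : ℕ, n ≤ 10 →
      ∑ j ∈ Finset.range 11, wgt j * (j : ℂ) ^ n = if n = 5 then 1 else 0 := by
    intro n hn
    interval_cases n <;>
      norm_num [Finset.sum_range_succ, wgt0, wgt1, wgt2, wgt3, wgt4, wgt5, wgt6, wgt7, wgt8, wgt9, wgt10]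
  -- Step 3: generating identity over all subsets
  have hV : ∀ x z t : ℂ,
      ∏ m, ((x - e m) * t + (z - e m))
        = ∑ S ∈ (Finset.univ : Finset (Fin 10)).powerset,
            ((∏ i ∈ S, (x - e i)) * (∏ j ∈ Sᶜ, (z - e j))) * t ^ S.card := by
    intro x z t
    rw [Finset.prod_add]
    refine Finset.sum_congr rfl fun S _ => ?_
    rw [Finset.prod_mul_distrib, Finset.prod_const, Finset.compl_eq_univ_sdiff]
    ring
  -- Step 4: closed form for the sum over 5-element subsets
  have hH : ∀ x z : ℂ,
      ∑ S ∈ Finset.powersetCard 5 (Finset.univ : Finset (Fin 10)),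
          (∏ i ∈ S, (x - e i)) * (∏ j ∈ Sᶜ, (z - e j))
      = (∑ j ∈ Finset.range 11, wgt j * ∑ k ∈ Finset.range 11, lam k * ((j : ℂ) * x + z) ^ k * ((j : ℂ) + 1) ^ (10 - k)) := by
    intro x z
    have hne : ∀ j : ℕ, (j : ℂ) + 1 ≠ 0 := by
      intro j
      have h : ((j : ℂ) + 1) = ((j + 1 : ℕ) : ℂ) := by push_cast; ring
      rw [h]
      exact Nat.cast_ne_zero.mpr (Nat.succ_ne_zero j)
    calc ∑ S ∈ Finset.powersetCard 5 (Finset.univ : Finset (Fin 10)),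
            (∏ i ∈ S, (x - e i)) * (∏ j ∈ Sᶜ, (z - e j))
        = ∑ S ∈ (Finset.univ : Finset (Fin 10)).powerset,
            ((∏ i ∈ S, (x - e i)) * (∏ j ∈ Sᶜ, (z - e j))) * (if S.card = 5 then 1 else 0) := by
          rw [Finset.powersetCard_eq_filter, Finset.sum_filter]
          refine Finset.sum_congr rfl fun S _ => ?_
          by_cases h : S.card = 5 <;> simp [h]
      _ = ∑ S ∈ (Finset.univ : Finset (Fin 10)).powerset,
            ∑ j ∈ Finset.range 11,
              wgt j * (((∏ i ∈ S, (x - e i)) * (∏ j ∈ Sᶜ, (z - e j))) * (j : ℂ) ^ S.card) := by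
          refine Finset.sum_congr rfl fun S _ => ?_
          have hc : S.card ≤ 10 := by
            have := Finset.card_le_univ S
            simpa using this
          rw [← hdelta S.card hc, Finset.mul_sum]
          refine Finset.sum_congr rfl fun j _ => ?_
          ring
      _ = ∑ j ∈ Finset.range 11, wgt j *
            ∑ S ∈ (Finset.univ : Finset (Fin 10)).powerset,
              ((∏ i ∈ S, (x - e i)) * (∏ j ∈ Sᶜ, (z - e j))) * (j : ℂ) ^ S.card := by
          rw [Finset.sum_comm]
          refine Finset.sum_congr rfl fun j _ => ?_
          rw [Finset.mul_sum]
      _ = (∑ j ∈ Finset.range 11, wgt j * ∑ k ∈ Finset.range 11, lam k * ((j : ℂ) * x + z) ^ k * ((j : ℂ) + 1) ^ (10 - k)) := by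
          refine Finset.sum_congr rfl fun j _ => ?_
          rw [← hV x z (j : ℂ), h10 (j : ℂ) x z (hne j)]
  -- Step 5: sum the defining identities of the partition matrices
  have hK : ∀ x z : ℂ,
      (∑ S ∈ Finset.powersetCard 5 (Finset.univ : Finset (Fin 10)),
          (∏ i ∈ S, (x - e i)) * (∏ j ∈ Sᶜ, (z - e j)))
      + (∑ S ∈ Finset.powersetCard 5 (Finset.univ : Finset (Fin 10)),
          (∏ i ∈ S, (z - e i)) * (∏ j ∈ Sᶜ, (x - e j)))
      - 252 * F x z
      = (x - z) ^ 2 * ∑ a, ∑ b,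
          (∑ S ∈ Finset.powersetCard 5 (Finset.univ : Finset (Fin 10)), L S a b)
            * x ^ (a : ℕ) * z ^ (b : ℕ) := by
    intro x z
    have hcard : (Finset.powersetCard 5 (Finset.univ : Finset (Fin 10))).card = 252 := by
      rw [Finset.card_powersetCard]
      simp [Finset.card_univ]
      decide
    have hsum := Finset.sum_congr rfl (fun S hS => hL S hS x z)
    rw [Finset.sum_sub_distrib, Finset.sum_add_distrib, Finset.sum_const, hcard,
      nsmul_eq_mul] at hsum
    push_cast at hsum
    rw [hsum, ← Finset.mul_sum]
    congr 1
    rw [Finset.sum_comm]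
    refine Finset.sum_congr rfl fun a _ => ?_
    rw [Finset.sum_comm]
    refine Finset.sum_congr rfl fun b _ => ?_
    rw [← Finset.sum_mul, ← Finset.sum_mul]
  -- Step 6: the master polynomial identity
  have hmaster : ∀ x z : ℂ,
      (∑ j ∈ Finset.range 11, wgt j * ∑ k ∈ Finset.range 11, lam k * ((j : ℂ) * x + z) ^ k * ((j : ℂ) + 1) ^ (10 - k)) + (∑ j ∈ Finset.range 11, wgt j * ∑ k ∈ Finset.range 11, lam k * ((j : ℂ) * z + x) ^ k * ((j : ℂ) + 1) ^ (10 - k)) - 252 * F x z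
      = (x - z) ^ 2 * ((112 : ℂ) * lam 2 * x ^ 0 * z ^ 0 + (42 : ℂ) * lam 3 * x ^ 0 * z ^ 1 + (12 : ℂ) * lam 4 * x ^ 0 * z ^ 2 + (2 : ℂ) * lam 5 * x ^ 0 * z ^ 3 + (42 : ℂ) * lam 3 * x ^ 1 * z ^ 0 + (144 : ℂ) * lam 4 * x ^ 1 * z ^ 1 + (54 : ℂ) * lam 5 * x ^ 1 * z ^ 2 + (12 : ℂ) * lam 6 * x ^ 1 * z ^ 3 + (12 : ℂ) * lam 4 * x ^ 2 * z ^ 0 + (54 : ℂ) * lam 5 * x ^ 2 * z ^ 1 + (144 : ℂ) * lam 6 * x ^ 2 * z ^ 2 + (42 : ℂ) * lam 7 * x ^ 2 * z ^ 3 + (2 : ℂ) * lam 5 * x ^ 3 * z ^ 0 + (12 : ℂ) * lam 6 * x ^ 3 * z ^ 1 + (42 : ℂ) * lam 7 * x ^ 3 * z ^ 2 + (112 : ℂ) * lam 8 * x ^ 3 * z ^ 3) := by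
    intro x z
    rw [hF]
    simp only [Finset.sum_range_succ, Finset.sum_range_zero, wgt0, wgt1, wgt2, wgt3, wgt4, wgt5, wgt6, wgt7, wgt8, wgt9, wgt10]
    push_cast
    norm_num
    ring
  -- Step 7: cancel (x-z)^2
  have key : ∀ x z : ℂ, x ≠ z →
      ∑ a, ∑ b, (∑ S ∈ Finset.powersetCard 5 (Finset.univ : Finset (Fin 10)), L S a b)
          * x ^ (a : ℕ) * z ^ (b : ℕ)
      = (112 : ℂ) * lam 2 * x ^ 0 * z ^ 0 + (42 : ℂ) * lam 3 * x ^ 0 * z ^ 1 + (12 : ℂ) * lam 4 * x ^ 0 * z ^ 2 + (2 : ℂ) * lam 5 * x ^ 0 * z ^ 3 + (42 : ℂ) * lam 3 * x ^ 1 * z ^ 0 + (144 : ℂ) * lam 4 * x ^ 1 * z ^ 1 + (54 : ℂ) * lam 5 * x ^ 1 * z ^ 2 + (12 : ℂ) * lam 6 * x ^ 1 * z ^ 3 + (12 : ℂ) * lam 4 * x ^ 2 * z ^ 0 + (54 : ℂ) * lam 5 * x ^ 2 * z ^ 1 + (144 : ℂ) * lam 6 * x ^ 2 * z ^ 2 +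 (42 : ℂ) * lam 7 * x ^ 2 * z ^ 3 + (2 : ℂ) * lam 5 * x ^ 3 * z ^ 0 + (12 : ℂ) * lam 6 * x ^ 3 * z ^ 1 + (42 : ℂ) * lam 7 * x ^ 3 * z ^ 2 + (112 : ℂ) * lam 8 * x ^ 3 * z ^ 3 := by
    intro x z hxz
    have h2 : (x - z) ^ 2 ≠ 0 := pow_ne_zero _ (sub_ne_zero.mpr hxz)
    refine mul_left_cancel₀ h2 ?_
    rw [← hK x z, hH x z, hH z x, hmaster x z]
  have E04 := key 0 4 (by norm_num)
  have E05 := key 0 5 (by norm_num)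
  have E06 := key 0 6 (by norm_num)
  have E07 := key 0 7 (by norm_num)
  have E14 := key 1 4 (by norm_num)
  have E15 := key 1 5 (by norm_num)
  have E16 := key 1 6 (by norm_num)
  have E17 := key 1 7 (by norm_num)
  have E24 := key 2 4 (by norm_num)
  have E25 := key 2 5 (by norm_num)
  have E26 := key 2 6 (by norm_num)
  have E27 := key 2 7 (by norm_num)
  have E34 := key 3 4 (by norm_num)
  have E35 := key 3 5 (by norm_num)
  have E36 := key 3 6 (by norm_num)
  have E37 := key 3 7 (by norm_num)
  simp only [Fin.sum_univ_four, Fin.val_zero, Fin.val_one,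
    (show ((2 : Fin 4) : ℕ) = 2 from rfl), (show ((3 : Fin 4) : ℕ) = 3 from rfl)] at E04 E05 E06 E07 E14 E15 E16 E17 E24 E25 E26 E27 E34 E35 E36 E37
  norm_num at E04 E05 E06 E07 E14 E15 E16 E17 E24 E25 E26 E27 E34 E35 E36 E37
  have h00 : (∑ S ∈ Finset.powersetCard 5 (Finset.univ : Finset (Fin 10)), L S 0 0) = 112 * lam 2 := by
    linear_combination (35 : ℂ) * E04 + (-84 : ℂ) * E05 + (70 : ℂ) * E06 + (-20 : ℂ) * E07
  have h01 : (∑ S ∈ Finset.powersetCard 5 (Finset.univ : Finset (Fin 10)), L S 0 1) = 42 * lam 3 := by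
    linear_combination (-107/6 : ℂ) * E04 + (47 : ℂ) * E05 + (-83/2 : ℂ) * E06 + (37/3 : ℂ) * E07
  have h02 : (∑ S ∈ Finset.powersetCard 5 (Finset.univ : Finset (Fin 10)), L S 0 2) = 12 * lam 4 := by
    linear_combination (3 : ℂ) * E04 + (-17/2 : ℂ) * E05 + (8 : ℂ) * E06 + (-5/2 : ℂ) * E07
  have h03 : (∑ S ∈ Finset.powersetCard 5 (Finset.univ : Finset (Fin 10)), L S 0 3) = 2 * lam 5 := by
    linear_combination (-1/6 : ℂ) * E04 + (1/2 : ℂ) * E05 + (-1/2 : ℂ) * E06 + (1/6 : ℂ) * E07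
  have h10 : (∑ S ∈ Finset.powersetCard 5 (Finset.univ : Finset (Fin 10)), L S 1 0) = 42 * lam 3 := by
    linear_combination (-385/6 : ℂ) * E04 + (154 : ℂ) * E05 + (-385/3 : ℂ) * E06 + (110/3 : ℂ) * E07 + (105 : ℂ) * E14 + (-252 : ℂ) * E15 + (210 : ℂ) * E16 + (-60 : ℂ) * E17 + (-105/2 : ℂ) * E24 + (126 : ℂ) * E25 + (-105 : ℂ) * E26 + (30 : ℂ) * E27 + (35/3 : ℂ) * E34 + (-28 : ℂ) * E35 + (70/3 : ℂ) * E36 + (-20/3 : ℂ) * E37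
  have h11 : (∑ S ∈ Finset.powersetCard 5 (Finset.univ : Finset (Fin 10)), L S 1 1) = 144 * lam 4 := by
    linear_combination (1177/36 : ℂ) * E04 + (-517/6 : ℂ) * E05 + (913/12 : ℂ) * E06 + (-407/18 : ℂ) * E07 + (-107/2 : ℂ) * E14 + (141 : ℂ) * E15 + (-249/2 : ℂ) * E16 + (37 : ℂ) * E17 + (107/4 : ℂ) * E24 + (-141/2 : ℂ) * E25 + (249/4 : ℂ) * E26 + (-37/2 : ℂ) * E27 + (-107/18 : ℂ) * E34 + (47/3 : ℂ) * E35 + (-83/6 : ℂ) * E36 + (37/9 : ℂ) * E37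
  have h12 : (∑ S ∈ Finset.powersetCard 5 (Finset.univ : Finset (Fin 10)), L S 1 2) = 54 * lam 5 := by
    linear_combination (-11/2 : ℂ) * E04 + (187/12 : ℂ) * E05 + (-44/3 : ℂ) * E06 + (55/12 : ℂ) * E07 + (9 : ℂ) * E14 + (-51/2 : ℂ) * E15 + (24 : ℂ) * E16 + (-15/2 : ℂ) * E17 + (-9/2 : ℂ) * E24 + (51/4 : ℂ) * E25 + (-12 : ℂ) * E26 + (15/4 : ℂ) * E27 + (1 : ℂ) * E34 + (-17/6 : ℂ) * E35 + (8/3 : ℂ) * E36 + (-5/6 : ℂ) * E37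
  have h13 : (∑ S ∈ Finset.powersetCard 5 (Finset.univ : Finset (Fin 10)), L S 1 3) = 12 * lam 6 := by
    linear_combination (11/36 : ℂ) * E04 + (-11/12 : ℂ) * E05 + (11/12 : ℂ) * E06 + (-11/36 : ℂ) * E07 + (-1/2 : ℂ) * E14 + (3/2 : ℂ) * E15 + (-3/2 : ℂ) * E16 + (1/2 : ℂ) * E17 + (1/4 : ℂ) * E24 + (-3/4 : ℂ) * E25 + (3/4 : ℂ) * E26 + (-1/4 : ℂ) * E27 + (-1/18 : ℂ) * E34 + (1/6 : ℂ) * E35 + (-1/6 : ℂ) * E36 + (1/18 : ℂ) * E37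
  have h20 : (∑ S ∈ Finset.powersetCard 5 (Finset.univ : Finset (Fin 10)), L S 2 0) = 12 * lam 4 := by
    linear_combination (35 : ℂ) * E04 + (-84 : ℂ) * E05 + (70 : ℂ) * E06 + (-20 : ℂ) * E07 + (-175/2 : ℂ) * E14 + (210 : ℂ) * E15 + (-175 : ℂ) * E16 + (50 : ℂ) * E17 + (70 : ℂ) * E24 + (-168 : ℂ) * E25 + (140 : ℂ) * E26 + (-40 : ℂ) * E27 + (-35/2 : ℂ) * E34 + (42 : ℂ) * E35 + (-35 : ℂ) * E36 + (10 : ℂ) * E37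
  have h21 : (∑ S ∈ Finset.powersetCard 5 (Finset.univ : Finset (Fin 10)), L S 2 1) = 54 * lam 5 := by
    linear_combination (-107/6 : ℂ) * E04 + (47 : ℂ) * E05 + (-83/2 : ℂ) * E06 + (37/3 : ℂ) * E07 + (535/12 : ℂ) * E14 + (-235/2 : ℂ) * E15 + (415/4 : ℂ) * E16 + (-185/6 : ℂ) * E17 + (-107/3 : ℂ) * E24 + (94 : ℂ) * E25 + (-83 : ℂ) * E26 + (74/3 : ℂ) * E27 + (107/12 : ℂ) * E34 + (-47/2 : ℂ) * E35 + (83/4 : ℂ) * E36 + (-37/6 : ℂ) * E37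
  have h22 : (∑ S ∈ Finset.powersetCard 5 (Finset.univ : Finset (Fin 10)), L S 2 2) = 144 * lam 6 := by
    linear_combination (3 : ℂ) * E04 + (-17/2 : ℂ) * E05 + (8 : ℂ) * E06 + (-5/2 : ℂ) * E07 + (-15/2 : ℂ) * E14 + (85/4 : ℂ) * E15 + (-20 : ℂ) * E16 + (25/4 : ℂ) * E17 + (6 : ℂ) * E24 + (-17 : ℂ) * E25 + (16 : ℂ) * E26 + (-5 : ℂ) * E27 + (-3/2 : ℂ) * E34 + (17/4 : ℂ) * E35 + (-4 : ℂ) * E36 + (5/4 : ℂ) * E37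
  have h23 : (∑ S ∈ Finset.powersetCard 5 (Finset.univ : Finset (Fin 10)), L S 2 3) = 42 * lam 7 := by
    linear_combination (-1/6 : ℂ) * E04 + (1/2 : ℂ) * E05 + (-1/2 : ℂ) * E06 + (1/6 : ℂ) * E07 + (5/12 : ℂ) * E14 + (-5/4 : ℂ) * E15 + (5/4 : ℂ) * E16 + (-5/12 : ℂ) * E17 + (-1/3 : ℂ) * E24 + (1 : ℂ) * E25 + (-1 : ℂ) * E26 + (1/3 : ℂ) * E27 + (1/12 : ℂ) * E34 + (-1/4 : ℂ) * E35 + (1/4 : ℂ) * E36 + (-1/12 : ℂ) * E37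
  have h30 : (∑ S ∈ Finset.powersetCard 5 (Finset.univ : Finset (Fin 10)), L S 3 0) = 2 * lam 5 := by
    linear_combination (-35/6 : ℂ) * E04 + (14 : ℂ) * E05 + (-35/3 : ℂ) * E06 + (10/3 : ℂ) * E07 + (35/2 : ℂ) * E14 + (-42 : ℂ) * E15 + (35 : ℂ) * E16 + (-10 : ℂ) * E17 + (-35/2 : ℂ) * E24 + (42 : ℂ) * E25 + (-35 : ℂ) * E26 + (10 : ℂ) * E27 + (35/6 : ℂ) * E34 + (-14 : ℂ) * E35 + (35/3 : ℂ) * E36 + (-10/3 : ℂ) * E37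
  have h31 : (∑ S ∈ Finset.powersetCard 5 (Finset.univ : Finset (Fin 10)), L S 3 1) = 12 * lam 6 := by
    linear_combination (107/36 : ℂ) * E04 + (-47/6 : ℂ) * E05 + (83/12 : ℂ) * E06 + (-37/18 : ℂ) * E07 + (-107/12 : ℂ) * E14 + (47/2 : ℂ) * E15 + (-83/4 : ℂ) * E16 + (37/6 : ℂ) * E17 + (107/12 : ℂ) * E24 + (-47/2 : ℂ) * E25 + (83/4 : ℂ) * E26 + (-37/6 : ℂ) * E27 + (-107/36 : ℂ) * E34 + (47/6 : ℂ) * E35 + (-83/12 : ℂ) * E36 + (37/18 : ℂ) * E37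
  have h32 : (∑ S ∈ Finset.powersetCard 5 (Finset.univ : Finset (Fin 10)), L S 3 2) = 42 * lam 7 := by
    linear_combination (-1/2 : ℂ) * E04 + (17/12 : ℂ) * E05 + (-4/3 : ℂ) * E06 + (5/12 : ℂ) * E07 + (3/2 : ℂ) * E14 + (-17/4 : ℂ) * E15 + (4 : ℂ) * E16 + (-5/4 : ℂ) * E17 + (-3/2 : ℂ) * E24 + (17/4 : ℂ) * E25 + (-4 : ℂ) * E26 + (5/4 : ℂ) * E27 + (1/2 : ℂ) * E34 + (-17/12 : ℂ) * E35 + (4/3 : ℂ) * E36 + (-5/12 : ℂ) * E37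
  have h33 : (∑ S ∈ Finset.powersetCard 5 (Finset.univ : Finset (Fin 10)), L S 3 3) = 112 * lam 8 := by
    linear_combination (1/36 : ℂ) * E04 + (-1/12 : ℂ) * E05 + (1/12 : ℂ) * E06 + (-1/36 : ℂ) * E07 + (-1/12 : ℂ) * E14 + (1/4 : ℂ) * E15 + (-1/4 : ℂ) * E16 + (1/12 : ℂ) * E17 + (1/12 : ℂ) * E24 + (-1/4 : ℂ) * E25 + (1/4 : ℂ) * E26 + (-1/12 : ℂ) * E27 + (-1/36 : ℂ) * E34 + (1/12 : ℂ) * E35 + (-1/12 : ℂ) * E36 + (1/36 : ℂ) * E37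
  ext a b
  fin_cases a <;> fin_cases b <;>
    simp [Matrix.smul_apply, smul_eq_mul, Matrix.sum_apply, Matrix.cons_val_zero,
      Matrix.cons_val_one, Matrix.head_cons, Matrix.cons_val_two, Matrix.tail_cons,
      Matrix.cons_val_three, Matrix.head_fin_const, Matrix.vecHead, Matrix.vecTail]
  · linear_combination (1/2 : ℂ) * h00
  · linear_combination (1/2 : ℂ) * h01
  · linear_combination (1/2 : ℂ) * h02
  · linear_combination (1/2 : ℂ) * h03
  · linear_combination (1/2 : ℂ) * h10
  · linear_combination (1/2 : ℂ) * h11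
  · linear_combination (1/2 : ℂ) * h12
  · linear_combination (1/2 : ℂ) * h13
  · linear_combination (1/2 : ℂ) * h20
  · linear_combination (1/2 : ℂ) * h21
  · linear_combination (1/2 : ℂ) * h22
  · linear_combination (1/2 : ℂ) * h23
  · linear_combination (1/2 : ℂ) * h30
  · linear_combination (1/2 : ℂ) * h31
  · linear_combination (1/2 : ℂ) * h32
  · linear_combination (1/2 : ℂ) * h33
end

section
/- Let g = 5, let e_1, …, e_{12} ∈ ℂ, let f(x) = ∏_{m=1}^{12}(x − e_m) = ∑_{k=0}^{12} λ_k x^k with Kleinian 2-polar F(x,z), and for each 6-element subset S of {1,…,12} let Λ^{[S]} be the unique symmetric 5×5 matrix with P_S(x)P_{S^c}(z) + P_S(z)P_{S^c}(x) − F(x,z) = (x−z)² ∑_{i,j=1}^{5} Λ^{[S]}_{ij} x^{i−1} z^{j−1}. Then (1/2) ∑_S Λ^{[S]} = [[210λ_2, 84λ_3, 28λ_4, 7λ_5, λ_6], [84λ_3, 280λ_4, 119λ_5, 38λ_6, 7λ_7], [28λ_4, 119λ_5, 300λ_6, 119λ_7, 28λ_8], [7λ_5, 38λ_6, 119λ_7,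 280λ_8, 84λ_9], [λ_6, 7λ_7, 28λ_8, 84λ_9, 210λ_{10}]], the sum running over all 6-element subsets S (equivalently, over the N_5 = 462 unordered partitions {S, S^c}). Moreover, for the particular subset S = {1,2,3,4,5,6}, the entry satisfies Λ^{[S]}_{24} = 2s_6 + 2s̃_6 + s_1 s̃_5 + s_5 s̃_1, where s_j (resp. s̃_j) is the elementary symmetric polynomial of degree j in e_1,…,e_6 (resp. e_7,…,e_{12}). -/
/-!
A matrix `M` is determined by the polynomial `(x - z)^2 ∑ M_ab x^a z^b`, so both claims reduce to
polynomial identities in `x, z`.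

Summing over all `S`, the `u^6`-coefficient of `∏_m ((x - e_m) u + (z - e_m))` is
`∑_S P_S(x) P_{S^c}(z)`. Writing the same product as `∏_m ((xu + z) - e_m (u + 1))`, i.e. as the
homogenisation `∑_k λ_k (xu + z)^k (u + 1)^{12-k}` of `f`, that coefficient is an explicit
binomial combination of the `λ_k`, and the claim about `Λ_5` becomes an identity in the `λ_k`.

For one partition, `Λ^{[S]}` is obtained by dividing `P_S(x) P_{S^c}(z) + P_S(z) P_{S^c}(x) - F`
by `(x - z)^2`, and by Vieta its entry `(2,4)` is a quadratic expression in the elementary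
symmetric functions of the two halves.
-/

open Finset

/-- The elementary symmetric function of degree `k` in the values `e i`, `i ∈ T`. -/
noncomputable def esymOn {n : ℕ} (T : Finset (Fin n)) (k : ℕ) (e : Fin n → ℂ) : ℂ :=
  ∑ A ∈ Finset.powersetCard k T, ∏ i ∈ A, e i

open Polynomial

namespace Matrix

variable {R : Type*} [CommRing R] {m n : ℕ}

noncomputable def powerForm (M : Matrix (Fin m) (Fin n) R) (x z : R) : R :=
  ∑ a, ∑ b, M a b * x ^ (a : ℕ) * z ^ (b : ℕ)

lemma powerForm_sum {ι : Type*} (s : Finset ι) (M : ι → Matrix (Fin m) (Fin n) R) (x z : R) :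
    powerForm (∑ i ∈ s, M i) x z = ∑ i ∈ s, powerForm (M i) x z := by
  simp only [powerForm, sum_apply, Finset.sum_mul]
  rw [Finset.sum_comm (s := s)]
  exact Finset.sum_congr rfl fun a _ => Finset.sum_comm

end Matrix

section Coefficients

variable {R : Type*} [CommRing R]

lemma Polynomial.coeff_sum_fin_C_mul_X_pow {n : ℕ} (c : Fin n → R) (a : Fin n) :
    (∑ b, C (c b) * X ^ (b : ℕ)).coeff a = c a := by
  simp [finsetSum_coeff, Fin.val_inj]

lemma Polynomial.coeff_C_mul_X_add_C_pow (a b : R) (k i : ℕ) :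
    ((C a * X + C b) ^ k).coeff i = k.choose i * a ^ i * b ^ (k - i) := by
  have hexp : (C a * X + C b) ^ k
      = ∑ m ∈ range (k + 1), C (k.choose m * a ^ m * b ^ (k - m)) * X ^ m := by
    rw [add_pow]
    refine sum_congr rfl fun m _ => ?_
    simp only [map_mul, map_pow, map_natCast]
    ring
  rw [hexp, finsetSum_coeff]
  simp only [coeff_C_mul_X_pow, sum_ite_eq, mem_range]
  split_ifs with hi
  · rfl
  · simp [Nat.choose_eq_zero_of_lt (by omega : k < i)]

variable [IsDomain R]

lemma eq_of_sum_mul_pow_eq_of_infinite {n : ℕ} {c d : Fin n → R} {s : Set R} (hs : s.Infinite)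
    (h : ∀ x ∈ s, ∑ a, c a * x ^ (a : ℕ) = ∑ a, d a * x ^ (a : ℕ)) : c = d := by
  have hpoly : ∑ a, C (c a) * X ^ (a : ℕ) = ∑ a, C (d a) * X ^ (a : ℕ) :=
    eq_of_infinite_eval_eq _ _ <| hs.mono fun x hx => by simpa [eval_finsetSum] using h x hx
  funext a
  simpa only [coeff_sum_fin_C_mul_X_pow] using congrArg (coeff · a) hpoly

variable [Infinite R]

lemma Polynomial.coeff_eq_of_forall_eval_eq_sum {p : R[X]} {N : ℕ} {lam : ℕ → R}
    (h : ∀ x, p.eval x = ∑ k ∈ range N, lam k * x ^ k) {k : ℕ} (hk : k < N) :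
    p.coeff k = lam k := by
  have hp : p = ∑ j ∈ range N, C (lam j) * X ^ j :=
    Polynomial.funext fun x => by simpa [eval_finsetSum] using h x
  simp [hp, finsetSum_coeff, hk]

lemma Matrix.eq_of_sub_sq_mul_powerForm_eq {m n : ℕ} {M N : Matrix (Fin m) (Fin n) R}
    (h : ∀ x z, (x - z) ^ 2 * M.powerForm x z = (x - z) ^ 2 * N.powerForm x z) : M = N := by
  have hrows : ∀ z, (fun a => ∑ b, M a b * z ^ (b : ℕ)) = fun a => ∑ b, N a b * z ^ (b : ℕ) := by
    intro z
    refine eq_of_sum_mul_pow_eq_of_infinite (Set.finite_singleton z).infinite_compl ?_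
    intro x hx
    have := mul_left_cancel₀ (pow_ne_zero 2 (sub_ne_zero.mpr hx)) (h x z)
    simpa only [powerForm, Finset.sum_mul, mul_right_comm _ (x ^ _)] using this
  ext a b
  exact congrFun (eq_of_sum_mul_pow_eq_of_infinite Set.infinite_univ
    fun z _ => congrFun (hrows z) a) b

end Coefficients

lemma Finset.prod_sub_mul_eq_sum_coeff_mul_pow {K ι : Type*} [Field K] (s : Finset ι)
    (e : ι → K) (a b : K) :
    ∏ m ∈ s, (a - e m * b)
      = ∑ k ∈ range (#s + 1), (∏ m ∈ s, (X - C (e m))).coeff k * a ^ k * b ^ (#s - k) := by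
  set f := ∏ m ∈ s, (X - C (e m))
  have hdeg : f.natDegree = #s := natDegree_finsetProd_X_sub_C_eq_card s e
  rcases eq_or_ne b 0 with rfl | hb
  · have hlead : f.coeff #s = 1 := hdeg ▸ (monic_prod_X_sub_C e s).coeff_natDegree
    rw [sum_range_succ, sum_eq_zero fun k hk => by
      rw [zero_pow (Nat.sub_ne_zero_of_lt (mem_range.mp hk)), mul_zero]]
    simp [hlead]
  · calc ∏ m ∈ s, (a - e m * b) = b ^ #s * f.eval (a / b) := by
          simp only [f, eval_prod, eval_sub, eval_X, eval_C, ← prod_const, ← prod_mul_distrib]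
          refine prod_congr rfl fun m _ => ?_
          field_simp
      _ = ∑ k ∈ range (#s + 1), f.coeff k * a ^ k * b ^ (#s - k) := by
          rw [eval_eq_sum_range' (by omega : f.natDegree < #s + 1), mul_sum]
          refine sum_congr rfl fun k hk => ?_
          rw [div_pow, ← Nat.sub_add_cancel (Nat.lt_succ_iff.mp (mem_range.mp hk)), pow_add,
            Nat.add_sub_cancel]
          field_simp

lemma Finset.sum_powersetCard_prod_mul_prod_compl {K ι : Type*} [Field K] [Infinite K]
    [Fintype ι] [DecidableEq ι] (e : ι → K) (r : ℕ) (x z : K) :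
    ∑ T ∈ powersetCard r univ, (∏ i ∈ T, (x - e i)) * ∏ j ∈ Tᶜ, (z - e j)
      = ∑ k ∈ range (Fintype.card ι + 1), (∏ m, (X - C (e m))).coeff k *
          ∑ i ∈ range (r + 1),
            (k.choose i * (Fintype.card ι - k).choose (r - i) : K) * x ^ i * z ^ (k - i) := by
  set n := Fintype.card ι
  set G : K[X] := ∏ m, (C (x - e m) * X + C (z - e m))
  have hG_coeff : G.coeff r
      = ∑ T ∈ powersetCard r univ, (∏ i ∈ T, (x - e i)) * ∏ j ∈ Tᶜ, (z - e j) := by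
    simp only [G, prod_add, prod_mul_distrib, prod_const, ← map_prod, finsetSum_coeff,
      mul_right_comm _ (X ^ _), ← C_mul, coeff_C_mul_X_pow, compl_eq_univ_sdiff]
    rw [← sum_filter, powersetCard_eq_filter]
    simp only [eq_comm]
  have hG : G = ∑ k ∈ range (n + 1), C ((∏ m, (X - C (e m))).coeff k) *
      ((C x * X + C z) ^ k * (X + 1) ^ (n - k)) := by
    refine Polynomial.funext fun u => ?_
    have hhom := univ.prod_sub_mul_eq_sum_coeff_mul_pow e (x * u + z) (u + 1)
    rw [card_univ] at hhom
    simp only [G, eval_prod, eval_finsetSum, eval_add, eval_mul, eval_C, eval_X, eval_pow,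
      eval_one]
    convert hhom using 1
    · exact prod_congr rfl fun m _ => by ring
    · exact sum_congr rfl fun k _ => by ring
  rw [← hG_coeff, hG, finsetSum_coeff]
  refine sum_congr rfl fun k _ => ?_
  rw [coeff_C_mul, coeff_mul, Nat.sum_antidiagonal_eq_sum_range_succ_mk]
  congr 1
  refine sum_congr rfl fun i _ => ?_
  rw [coeff_C_mul_X_add_C_pow, coeff_X_add_one_pow]
  ring

lemma coeff_prod_X_sub_C_eq_esymOn {n : ℕ} (T : Finset (Fin n)) (e : Fin n → ℂ) {k : ℕ}
    (hk : k ≤ #T) :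
    (∏ i ∈ T, (X - C (e i))).coeff k = (-1) ^ (#T - k) * esymOn T (#T - k) e := by
  simp_rw [sub_eq_add_neg, ← map_neg C]
  rw [T.prod_X_add_C_coeff _ hk, esymOn, mul_sum]
  refine sum_congr rfl fun A hA => ?_
  rw [prod_neg, (mem_powersetCard.mp hA).2]

section KleinPolar

variable {K : Type*} [Field K]

noncomputable def kleinPolar (g : ℕ) (lam : ℕ → K) (x z : K) : K :=
  2 * lam (2 * g + 2) * x ^ (g + 1) * z ^ (g + 1)
    + ∑ k ∈ range (g + 1), x ^ k * z ^ k * (2 * lam (2 * k) + (x + z) * lam (2 * k + 1))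

lemma kleinPolar_congr {g : ℕ} {lam lam' : ℕ → K} (h : ∀ k ≤ 2 * g + 2, lam k = lam' k) :
    kleinPolar g lam = kleinPolar g lam' := by
  ext x z
  unfold kleinPolar
  rw [h _ le_rfl]
  congr 1
  refine sum_congr rfl fun k hk => ?_
  have := mem_range.mp hk
  rw [h (2 * k) (by omega), h (2 * k + 1) (by omega)]

/-- The coefficient of `x^i z^j` in `kleinPolar g lam x z`, for `i, j ≤ g + 1`. -/
noncomputable def polarCoeff (lam : ℕ → K) (i j : ℕ) : K :=
  if i = j then 2 * lam (2 * i) else if i = j + 1 ∨ j = i + 1 then lam (i + j) else 0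

noncomputable def residualCoeff (p q : K[X]) (i j : ℕ) : K :=
  p.coeff i * q.coeff j + p.coeff j * q.coeff i - polarCoeff (p * q).coeff i j

/-- If `R(x, z) = (x - z)^2 Q(x, z)`, the coefficients of `Q` can be read off from
`Q = R x⁻² (1 - z/x)⁻² = R ∑ₖ (k + 1) zᵏ x^{-2-k}`. -/
noncomputable def residualMatrix (g : ℕ) (p q : K[X]) : Matrix (Fin g) (Fin g) K := fun a b =>
  ∑ k ∈ range (b + 1), (k + 1 : K) * residualCoeff p q (a + 2 + k) (b - k)

theorem residualMatrix_spec {p q : K[X]} (hp : p.natDegree ≤ 6) (hq : q.natDegree ≤ 6)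
    (x z : K) :
    p.eval x * q.eval z + p.eval z * q.eval x - kleinPolar 5 (p * q).coeff x z
      = (x - z) ^ 2 * (residualMatrix 5 p q).powerForm x z := by
  simp only [Matrix.powerForm, residualMatrix, Fin.sum_univ_five, Fin.coe_ofNat_eq_mod,
    Nat.reduceMod]
  simp only [sum_range_succ, sum_range_zero, residualCoeff, polarCoeff]
  norm_num only [if_true, if_false, or_true, or_false, true_or, false_or, or_self]
  simp only [coeff_mul, Nat.sum_antidiagonal_eq_sum_range_succ_mk, sum_range_succ,
    sum_range_zero, kleinPolar, eval_eq_sum_range' (show p.natDegree < 7 by omega),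
    eval_eq_sum_range' (show q.natDegree < 7 by omega)]
  simp (disch := omega) only [coeff_eq_zero_of_natDegree_lt]
  ring

theorem residualMatrix_one_three (p q : K[X]) :
    residualMatrix 5 p q 1 3
      = 2 * (p.coeff 0 * q.coeff 6 + p.coeff 6 * q.coeff 0)
        + p.coeff 1 * q.coeff 5 + p.coeff 5 * q.coeff 1 := by
  simp only [residualMatrix, Fin.coe_ofNat_eq_mod, Nat.reduceMod]
  simp only [sum_range_succ, sum_range_zero, residualCoeff, polarCoeff]
  norm_num only [if_true, if_false, or_true, or_false, true_or, false_or, or_self]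
  simp only [coeff_mul, Nat.sum_antidiagonal_eq_sum_range_succ_mk, sum_range_succ, sum_range_zero]
  ring

noncomputable def lambdaFive (lam : ℕ → K) : Matrix (Fin 5) (Fin 5) K :=
  !![210 * lam 2, 84 * lam 3, 28 * lam 4, 7 * lam 5, lam 6;
     84 * lam 3, 280 * lam 4, 119 * lam 5, 38 * lam 6, 7 * lam 7;
     28 * lam 4, 119 * lam 5, 300 * lam 6, 119 * lam 7, 28 * lam 8;
     7 * lam 5, 38 * lam 6, 119 * lam 7, 280 * lam 8, 84 * lam 9;
     lam 6, 7 * lam 7, 28 * lam 8, 84 * lam 9, 210 * lam 10]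

theorem sum_choose_mul_sub_kleinPolar (lam : ℕ → K) (x z : K) :
    (∑ k ∈ range 13, lam k * ∑ i ∈ range 7,
        (k.choose i * (12 - k).choose (6 - i) : K) * x ^ i * z ^ (k - i))
      + (∑ k ∈ range 13, lam k * ∑ i ∈ range 7,
        (k.choose i * (12 - k).choose (6 - i) : K) * z ^ i * x ^ (k - i))
      - 924 * kleinPolar 5 lam x z
      = (x - z) ^ 2 * ((2 : K) • lambdaFive lam).powerForm x z := by
  simp only [Matrix.powerForm, Fin.sum_univ_five, Fin.coe_ofNat_eq_mod, Nat.reduceMod,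
    Matrix.smul_apply, lambdaFive, Matrix.of_apply, Matrix.cons_val', Matrix.cons_val,
    Matrix.cons_val_zero, Matrix.cons_val_one, Matrix.empty_val', Matrix.cons_val_fin_one,
    kleinPolar, sum_range_succ, sum_range_zero]
  norm_num [Nat.choose]
  ring

end KleinPolar

section GenusFive

variable {K : Type*} [Field K] [Infinite K] (e : Fin 12 → K) {lam : ℕ → K}

theorem sum_partitionMatrix_eq (hlam : ∀ k < 13, (∏ m, (X - C (e m))).coeff k = lam k)
    (L : Finset (Fin 12) → Matrix (Fin 5) (Fin 5) K)
    (hL : ∀ S ∈ powersetCard 6 (univ : Finset (Fin 12)), ∀ x z : K,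
      (∏ i ∈ S, (x - e i)) * (∏ j ∈ Sᶜ, (z - e j))
        + (∏ i ∈ S, (z - e i)) * (∏ j ∈ Sᶜ, (x - e j)) - kleinPolar 5 lam x z
        = (x - z) ^ 2 * (L S).powerForm x z) :
    ∑ S ∈ powersetCard 6 univ, L S = (2 : K) • lambdaFive lam := by
  have hexpand : ∀ x z : K,
      ∑ T ∈ powersetCard 6 univ, (∏ i ∈ T, (x - e i)) * ∏ j ∈ Tᶜ, (z - e j)
        = ∑ k ∈ range 13, lam k * ∑ i ∈ range 7,
            (k.choose i * (12 - k).choose (6 - i) : K) * x ^ i * z ^ (k - i) := by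
    intro x z
    rw [sum_powersetCard_prod_mul_prod_compl, Fintype.card_fin]
    exact sum_congr rfl fun k hk => by rw [hlam k (mem_range.mp hk)]
  refine Matrix.eq_of_sub_sq_mul_powerForm_eq fun x z => ?_
  rw [Matrix.powerForm_sum, mul_sum, ← sum_congr rfl fun S hS => hL S hS x z, sum_sub_distrib,
    sum_add_distrib, hexpand, hexpand, sum_const, card_powersetCard, card_univ,
    Fintype.card_fin, ← sum_choose_mul_sub_kleinPolar, nsmul_eq_mul]
  norm_num [Nat.choose]

theorem partitionMatrix_eq_residualMatrix
    (hlam : ∀ k < 13, (∏ m, (X - C (e m))).coeff k = lam k) {S : Finset (Fin 12)}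
    (hS : #S = 6) {M : Matrix (Fin 5) (Fin 5) K}
    (hM : ∀ x z : K, (∏ i ∈ S, (x - e i)) * (∏ j ∈ Sᶜ, (z - e j))
        + (∏ i ∈ S, (z - e i)) * (∏ j ∈ Sᶜ, (x - e j)) - kleinPolar 5 lam x z
        = (x - z) ^ 2 * M.powerForm x z) :
    M = residualMatrix 5 (∏ i ∈ S, (X - C (e i))) (∏ i ∈ Sᶜ, (X - C (e i))) := by
  have hpolar : kleinPolar 5 ((∏ i ∈ S, (X - C (e i))) * ∏ i ∈ Sᶜ, (X - C (e i))).coeff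
      = kleinPolar 5 lam :=
    kleinPolar_congr fun k hk => by rw [prod_mul_prod_compl]; exact hlam k (by omega)
  have hdeg : ∀ T : Finset (Fin 12), #T = 6 → (∏ i ∈ T, (X - C (e i))).natDegree ≤ 6 :=
    fun T hT => (natDegree_finsetProd_X_sub_C_eq_card T e).trans_le hT.le
  refine Matrix.eq_of_sub_sq_mul_powerForm_eq fun x z => ?_
  rw [← hM, ← residualMatrix_spec (hdeg S hS)
    (hdeg Sᶜ (by rw [card_compl, Fintype.card_fin, hS])), hpolar]
  simp only [eval_prod, eval_sub, eval_X, eval_C]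

end GenusFive

theorem partitionMatrix_one_three (e : Fin 12 → ℂ) {lam : ℕ → ℂ}
    (hlam : ∀ k < 13, (∏ m, (X - C (e m))).coeff k = lam k) {S : Finset (Fin 12)}
    (hS : #S = 6) {M : Matrix (Fin 5) (Fin 5) ℂ}
    (hM : ∀ x z : ℂ, (∏ i ∈ S, (x - e i)) * (∏ j ∈ Sᶜ, (z - e j))
        + (∏ i ∈ S, (z - e i)) * (∏ j ∈ Sᶜ, (x - e j)) - kleinPolar 5 lam x z
        = (x - z) ^ 2 * M.powerForm x z) :
    M 1 3 = 2 * esymOn S 6 e + 2 * esymOn Sᶜ 6 e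
      + esymOn S 1 e * esymOn Sᶜ 5 e + esymOn S 5 e * esymOn Sᶜ 1 e := by
  have hSc : #Sᶜ = 6 := by rw [card_compl, Fintype.card_fin, hS]
  have hvieta : ∀ T : Finset (Fin 12), #T = 6 → ∀ k ≤ 6,
      (∏ i ∈ T, (X - C (e i))).coeff k = (-1) ^ (6 - k) * esymOn T (6 - k) e :=
    fun T hT k hk => by rw [coeff_prod_X_sub_C_eq_esymOn T e (hT ▸ hk), hT]
  rw [partitionMatrix_eq_residualMatrix e hlam hS hM, residualMatrix_one_three,
    hvieta S hS 0 (by norm_num), hvieta S hS 1 (by norm_num), hvieta S hS 5 (by norm_num),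
    hvieta S hS 6 (by norm_num), hvieta Sᶜ hSc 0 (by norm_num), hvieta Sᶜ hSc 1 (by norm_num),
    hvieta Sᶜ hSc 5 (by norm_num), hvieta Sᶜ hSc 6 (by norm_num)]
  simp [esymOn]
  ring

theorem genus_five_residual_matrix_sum_general
    (e : Fin 12 → ℂ)
    (lam : ℕ → ℂ)
    (hlam : ∀ x : ℂ, ∏ m, (x - e m) = ∑ k ∈ Finset.range 13, lam k * x ^ k)
    (F : ℂ → ℂ → ℂ)
    (hF : ∀ x z : ℂ, F x z = 2 * lam 12 * x ^ 6 * z ^ 6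
        + ∑ k ∈ Finset.range 6,
            x ^ k * z ^ k * (2 * lam (2 * k) + (x + z) * lam (2 * k + 1)))
    (L : Finset (Fin 12) → Matrix (Fin 5) (Fin 5) ℂ)
    (hL : ∀ S ∈ Finset.powersetCard 6 (Finset.univ : Finset (Fin 12)), ∀ x z : ℂ,
        (∏ i ∈ S, (x - e i)) * (∏ j ∈ Sᶜ, (z - e j))
          + (∏ i ∈ S, (z - e i)) * (∏ j ∈ Sᶜ, (x - e j)) - F x z
        = (x - z) ^ 2 * ∑ a, ∑ b, L S a b * x ^ (a : ℕ) * z ^ (b : ℕ)) :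
    (1 / 2 : ℂ) • ∑ S ∈ Finset.powersetCard 6 (Finset.univ : Finset (Fin 12)), L S
      = !![210 * lam 2, 84 * lam 3, 28 * lam 4, 7 * lam 5, lam 6;
           84 * lam 3, 280 * lam 4, 119 * lam 5, 38 * lam 6, 7 * lam 7;
           28 * lam 4, 119 * lam 5, 300 * lam 6, 119 * lam 7, 28 * lam 8;
           7 * lam 5, 38 * lam 6, 119 * lam 7, 280 * lam 8, 84 * lam 9;
           lam 6, 7 * lam 7, 28 * lam 8, 84 * lam 9, 210 * lam 10]
    ∧ L ({0, 1, 2, 3, 4, 5} : Finset (Fin 12)) 1 3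
        = 2 * esymOn ({0, 1, 2, 3, 4, 5} : Finset (Fin 12)) 6 e
          + 2 * esymOn (({0, 1, 2, 3, 4, 5} : Finset (Fin 12))ᶜ) 6 e
          + esymOn ({0, 1, 2, 3, 4, 5} : Finset (Fin 12)) 1 e
              * esymOn (({0, 1, 2, 3, 4, 5} : Finset (Fin 12))ᶜ) 5 e
          + esymOn ({0, 1, 2, 3, 4, 5} : Finset (Fin 12)) 5 e
              * esymOn (({0, 1, 2, 3, 4, 5} : Finset (Fin 12))ᶜ) 1 e := by
  obtain rfl : F = kleinPolar 5 lam := funext fun x => funext fun z => hF x z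
  have hcoeff : ∀ k < 13, (∏ m, (X - C (e m))).coeff k = lam k := fun k hk =>
    coeff_eq_of_forall_eval_eq_sum (by simpa [eval_prod] using hlam) hk
  refine ⟨?_, partitionMatrix_one_three e hcoeff rfl
    (hL _ (mem_powersetCard.mpr ⟨subset_univ _, rfl⟩))⟩
  rw [sum_partitionMatrix_eq e hcoeff L hL, smul_smul]
  norm_num
  rfl

/-- genus 5, the matrix `Λ_5` of Section 5 together with Example 6.4 of the
paper: summing the partition matrices `Λ^{[S]}` over all 6-element subsets `S` of the
twelve branch indices (twice the `N_5 = 462` unordered partitions) and halving gives the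
stated matrix `Λ_5`; moreover for the particular subset `S = {1,…,6}` the entry
`Λ^{[S]}_{24}` equals `2s_6 + 2s̃_6 + s_1 s̃_5 + s_5 s̃_1`, where `s_j` (resp. `s̃_j`)
is the `j`-th elementary symmetric polynomial in `e_1,…,e_6` (resp. `e_7,…,e_{12}`). -/
theorem genus_five_residual_matrix_sum
    (e : Fin 12 → ℂ)
    (lam : ℕ → ℂ)
    (hlam : ∀ x : ℂ, ∏ m, (x - e m) = ∑ k ∈ Finset.range 13, lam k * x ^ k)
    (F : ℂ → ℂ → ℂ)
    (hF : ∀ x z : ℂ, F x z = 2 * lam 12 * x ^ 6 * z ^ 6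
        + ∑ k ∈ Finset.range 6,
            x ^ k * z ^ k * (2 * lam (2 * k) + (x + z) * lam (2 * k + 1)))
    (L : Finset (Fin 12) → Matrix (Fin 5) (Fin 5) ℂ)
    (hLsymm : ∀ S ∈ Finset.powersetCard 6 (Finset.univ : Finset (Fin 12)), (L S).IsSymm)
    (hL : ∀ S ∈ Finset.powersetCard 6 (Finset.univ : Finset (Fin 12)), ∀ x z : ℂ,
        (∏ i ∈ S, (x - e i)) * (∏ j ∈ Sᶜ, (z - e j))
          + (∏ i ∈ S, (z - e i)) * (∏ j ∈ Sᶜ, (x - e j)) - F x z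
        = (x - z) ^ 2 * ∑ a, ∑ b, L S a b * x ^ (a : ℕ) * z ^ (b : ℕ)) :
    (1 / 2 : ℂ) • ∑ S ∈ Finset.powersetCard 6 (Finset.univ : Finset (Fin 12)), L S
      = !![210 * lam 2, 84 * lam 3, 28 * lam 4, 7 * lam 5, lam 6;
           84 * lam 3, 280 * lam 4, 119 * lam 5, 38 * lam 6, 7 * lam 7;
           28 * lam 4, 119 * lam 5, 300 * lam 6, 119 * lam 7, 28 * lam 8;
           7 * lam 5, 38 * lam 6, 119 * lam 7, 280 * lam 8, 84 * lam 9;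
           lam 6, 7 * lam 7, 28 * lam 8, 84 * lam 9, 210 * lam 10]
    ∧ L ({0, 1, 2, 3, 4, 5} : Finset (Fin 12)) 1 3
        = 2 * esymOn ({0, 1, 2, 3, 4, 5} : Finset (Fin 12)) 6 e
          + 2 * esymOn (({0, 1, 2, 3, 4, 5} : Finset (Fin 12))ᶜ) 6 e
          + esymOn ({0, 1, 2, 3, 4, 5} : Finset (Fin 12)) 1 e
              * esymOn (({0, 1, 2, 3, 4, 5} : Finset (Fin 12))ᶜ) 5 e
          + esymOn ({0, 1, 2, 3, 4, 5} : Finset (Fin 12)) 5 e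
              * esymOn (({0, 1, 2, 3, 4, 5} : Finset (Fin 12))ᶜ) 1 e :=
  genus_five_residual_matrix_sum_general e lam hlam F hF L hL
end
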